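/- arXiv:2505.18885 — 5 statements merged into one kernel-verified Lean document; each statement's English description precedes it below -/
import Mathlib

section
/- Let B be the simple graph on vertex set {1,2,...,7} with edge set {12,14,15,17,23,24,25,26,27,34,35,45,46,47,67} (writing uv for the edge between u and v). Then a 2-coloring c of the vertices of B with c(1) = gray is a legal 2-coloring of B if and only if its gray class is exactly {1,3,5,6,7} (and hence its white class is {2,4}). In particular, assuming vertex 1 is gray, B has a unique legal 2-coloring. -/
/-- A set `U` of vertices of a simple graph `G` induces a linear forest:
the induced subgraph is acyclic and every vertex of `U` has at most 2 neighbors in `U`. -/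
def InducesLinearForest {V : Type*} (G : SimpleGraph V) (U : Set V) : Prop :=
  (G.induce U).IsAcyclic ∧ ∀ v ∈ U, {w | w ∈ U ∧ G.Adj v w}.ncard ≤ 2

/-- A legal 2-coloring of `G` (`true` = gray, `false` = white): each color class
induces a linear forest. -/
def IsLegal2Coloring {V : Type*} (G : SimpleGraph V) (c : V → Bool) : Prop :=
  InducesLinearForest G {v | c v = true} ∧ InducesLinearForest G {v | c v = false}

/-- Vertex set {1, …, 7}. -/
abbrev VB : Type := {m : ℕ // m ∈ Finset.Icc 1 7}

/-- The edge set of the basic building block `B`. -/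
def BEdges : Set (ℕ × ℕ) :=
  {(1,2),(1,4),(1,5),(1,7),(2,3),(2,4),(2,5),(2,6),(2,7),
   (3,4),(3,5),(4,5),(4,6),(4,7),(6,7)}

/-- The basic building block `B` on vertex set {1, …, 7}. -/
def BGraph : SimpleGraph VB :=
  SimpleGraph.fromRel (fun u v => (u.val, v.val) ∈ BEdges)


/-!
Vertices 2 and 4 are adjacent and each is adjacent to every other vertex. A vertex of a linear
forest has at most two neighbours in it, so a colour class containing a vertex adjacent to all
others has at most three elements; if 2 and 4 had different colours, the two classes would cover
at most six of the seven vertices. Hence 2 and 4 share a colour, and a third vertex of that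
colour would close a triangle, so {2, 4} is a colour class — the white one, as 1 is gray.
Conversely, the gray class {1, 3, 5, 6, 7} induces the path 3-5-1-7-6 and the white class the edge
2-4; a graph mapping injectively into the integers with adjacent vertices going to consecutive
integers is a linear forest.
-/

open SimpleGraph

theorem SimpleGraph.isAcyclic_hasse_int : (hasse ℤ).IsAcyclic := by
  have not_reachable_succ (n : ℤ) :
      ¬((hasse ℤ).deleteEdges {s(n, n + 1)}).Reachable n (n + 1) := by
    rintro ⟨p⟩
    have stays_below {x y : ℤ} (q : ((hasse ℤ).deleteEdges {s(n, n + 1)}).Walk x y) :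
        x ≤ n → y ≤ n := by
      induction q with
      | nil => exact id
      | cons hxz _ ih =>
        simp only [deleteEdges_adj, hasse_adj, Order.covBy_iff_add_one_eq, Set.mem_singleton_iff,
          Sym2.eq_iff] at hxz
        omega
    exact absurd (stays_below p le_rfl) (by omega)
  refine isAcyclic_iff_forall_adj_isBridge.mpr fun a b hab => ?_
  rcases hasse_adj.mp hab with h | h <;> rw [Order.covBy_iff_add_one_eq] at h <;> subst h
  · exact isBridge_iff.mpr (not_reachable_succ a)
  · rw [Sym2.eq_swap]
    exact isBridge_iff.mpr (not_reachable_succ b)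

variable {V : Type*} {G : SimpleGraph V}

theorem SimpleGraph.isAcyclic_of_injective_of_adj_hasse (f : V → ℤ) (hf : Function.Injective f)
    (hadj : ∀ ⦃u v⦄, G.Adj u v → (hasse ℤ).Adj (f u) (f v)) : G.IsAcyclic :=
  isAcyclic_hasse_int.comap ⟨f, fun h => hadj h⟩ hf

theorem inducesLinearForest_of_injOn_of_adj_hasse {U : Set V} (f : V → ℤ) (hf : U.InjOn f)
    (hadj : ∀ u ∈ U, ∀ v ∈ U, G.Adj u v → (hasse ℤ).Adj (f u) (f v)) :
    InducesLinearForest G U := by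
  refine ⟨isAcyclic_of_injective_of_adj_hasse (f ∘ Subtype.val)
    (fun u v h => Subtype.ext (hf u.2 v.2 h)) (fun u v h => hadj u u.2 v v.2 h), fun v hv => ?_⟩
  calc {w | w ∈ U ∧ G.Adj v w}.ncard ≤ ({f v + 1, f v - 1} : Set ℤ).ncard := by
        refine Set.ncard_le_ncard_of_injOn f (fun w ⟨hw, hvw⟩ => ?_) (hf.mono fun w hw => hw.1)
        rcases hasse_adj.mp (hadj v hv w hw hvw) with h | h <;>
          rw [Order.covBy_iff_add_one_eq] at h <;>
          simp only [Set.mem_insert_iff, Set.mem_singleton_iff] <;> omega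
    _ ≤ 2 := (Set.ncard_insert_le _ _).trans (by rw [Set.ncard_singleton])

theorem InducesLinearForest.ncard_le_three_of_forall_adj [Finite V] {U : Set V}
    (hU : InducesLinearForest G U) {v : V} (hv : v ∈ U) (hadj : ∀ w ∈ U, w ≠ v → G.Adj v w) :
    U.ncard ≤ 3 :=
  calc U.ncard ≤ (insert v {w | w ∈ U ∧ G.Adj v w}).ncard :=
        Set.ncard_le_ncard fun w hw => or_iff_not_imp_left.mpr fun hwv => ⟨hw, hadj w hw hwv⟩
    _ ≤ 2 + 1 := (Set.ncard_insert_le _ _).trans (Nat.add_le_add_right (hU.2 v hv) 1)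

theorem InducesLinearForest.not_adj_of_adj_of_adj {U : Set V} (hU : InducesLinearForest G U)
    {u v w : V} (hu : u ∈ U) (hv : v ∈ U) (hw : w ∈ U) (huv : G.Adj u v) (huw : G.Adj u w) :
    ¬G.Adj v w := fun hvw => by
  classical
  have : (G.induce U).IsNClique 3 {⟨u, hu⟩, ⟨v, hv⟩, ⟨w, hw⟩} :=
    is3Clique_triple_iff.mpr ⟨huv, huw, hvw⟩
  exact hU.1.cliqueFree le_rfl _ this

theorem IsLegal2Coloring.inducesLinearForest {c : V → Bool} (hc : IsLegal2Coloring G c)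
    (b : Bool) : InducesLinearForest G {v | c v = b} := by
  cases b
  exacts [hc.2, hc.1]

theorem isLegal2Coloring_of_injOn_of_adj_hasse (c : V → Bool) (f : V → ℤ)
    (hf : ∀ u v, c u = c v → f u = f v → u = v)
    (hadj : ∀ u v, c u = c v → G.Adj u v → (hasse ℤ).Adj (f u) (f v)) :
    IsLegal2Coloring G c := by
  have (b : Bool) : InducesLinearForest G {v | c v = b} :=
    inducesLinearForest_of_injOn_of_adj_hasse f (fun u hu v hv => hf u v (hu.trans hv.symm))
      (fun u hu v hv => hadj u v (hu.trans hv.symm))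
  exact ⟨this true, this false⟩

theorem IsLegal2Coloring.eq_iff_of_forall_adj [Finite V] {c : V → Bool}
    (hc : IsLegal2Coloring G c) (hV : 6 < Nat.card V) {u v : V} (huv : u ≠ v)
    (hu : ∀ w, w ≠ u → G.Adj u w) (hv : ∀ w, w ≠ v → G.Adj v w) (w : V) :
    c w = c u ↔ w = u ∨ w = v := by
  have hcv : c v = c u := by
    by_contra hne
    have hcompl : {x | c x = c u}ᶜ = {x | c x = c v} := by
      ext x
      simp only [Set.mem_compl_iff, Set.mem_ofPred_eq]
      cases c x <;> cases hcu : c u <;> cases hcv : c v <;> simp_all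
    have hcard := Set.ncard_add_ncard_compl {x | c x = c u}
    rw [hcompl] at hcard
    have hu3 := (hc.inducesLinearForest (c u)).ncard_le_three_of_forall_adj rfl fun x _ => hu x
    have hv3 := (hc.inducesLinearForest (c v)).ncard_le_three_of_forall_adj rfl fun x _ => hv x
    omega
  refine ⟨fun hw => ?_, by rintro (rfl | rfl) <;> [rfl; exact hcv]⟩
  by_contra! hne
  exact (hc.inducesLinearForest (c u)).not_adj_of_adj_of_adj (v := v) (w := w) rfl hcv hw
    (hu v huv.symm) (hu w hne.1) (hv w hne.2)

instance : DecidablePred (· ∈ BEdges) := fun _ => by unfold BEdges; infer_instance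

instance : DecidableRel BGraph.Adj := fun _ _ => decidable_of_iff' _ (fromRel_adj _ _ _)

namespace BGraph

theorem two_adj_of_ne : ∀ w : VB, w ≠ ⟨2, by decide⟩ → BGraph.Adj ⟨2, by decide⟩ w := by
  decide

theorem four_adj_of_ne : ∀ w : VB, w ≠ ⟨4, by decide⟩ → BGraph.Adj ⟨4, by decide⟩ w := by
  decide

/-- Positions along the gray path 3-5-1-7-6 and along the white edge 2-4. -/
def pathPosition : ℕ → ℤ
  | 3 => 0 | 5 => 1 | 1 => 2 | 7 => 3 | 6 => 4 | 4 => 1 | _ => 0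

theorem isLegal2Coloring_of_gray (c : VB → Bool)
    (hc : ∀ v, c v = true ↔ v.val ∈ ({1, 3, 5, 6, 7} : Set ℕ)) : IsLegal2Coloring BGraph c := by
  refine isLegal2Coloring_of_injOn_of_adj_hasse c (fun v => pathPosition v.val) ?_ ?_ <;>
    intro u v huv <;> rw [Bool.eq_iff_iff, hc, hc] at huv <;> revert u v
  · decide
  · simp only [hasse_adj, Order.covBy_iff_add_one_eq]
    decide

end BGraph

/-- A 2-coloring `c` of `B` with `c 1 = gray` is a legal 2-coloring of `B` iff
its gray class is exactly {1,3,5,6,7}. -/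
theorem stmt0 (c : VB → Bool) (h1 : c ⟨1, by decide⟩ = true) :
    IsLegal2Coloring BGraph c ↔
      {v : VB | c v = true} = {v : VB | v.val ∈ ({1,3,5,6,7} : Set ℕ)} := by
  refine ⟨fun hc => ?_, fun h => BGraph.isLegal2Coloring_of_gray c fun v => Set.ext_iff.mp h v⟩
  have hclass := hc.eq_iff_of_forall_adj (by simp) (by decide) BGraph.two_adj_of_ne
    BGraph.four_adj_of_ne
  have h2 : c ⟨2, by decide⟩ = false :=
    Bool.eq_false_iff.mpr fun h2 => absurd ((hclass _).mp (h1.trans h2.symm)) (by decide)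
  ext w
  rw [Set.mem_ofPred_eq, ← Bool.not_eq_false, ← h2, hclass w]
  revert w
  decide
end

section
/- Let C be the simple graph on vertex set {1,2,...,12} whose edges are those of the basic block B on {1,...,7} (edge set {12,14,15,17,23,24,25,26,27,34,35,45,46,47,67}) together with the 5-cycle edges {8,9},{9,10},{10,11},{11,12},{8,12} and the attachment edges {1,8},{7,12}. Then every legal 2-coloring c of C with c(8) = white satisfies: c(12) = white, the restriction of c to {1,...,7} has gray class exactly {1,3,5,6,7}, and the vertices 9, 10, 11 are not all white. -/
/-- Vertex set {1, …, 12}. -/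
abbrev V12 : Type := {m : ℕ // m ∈ Finset.Icc 1 12}

/-- The edge set of the three-variable clause gadget `C`: the block `B` together with
the 5-cycle 8–9–10–11–12–8 and the attachment edges {1,8} and {7,12}. -/
def CEdges : Set (ℕ × ℕ) :=
  BEdges ∪ {(8,9),(9,10),(10,11),(11,12),(8,12),(1,8),(7,12)}

/-- The three-variable clause gadget `C` on vertex set {1, …, 12}. -/
def CGraph : SimpleGraph V12 :=
  SimpleGraph.fromRel (fun u v => (u.val, v.val) ∈ CEdges)

open SimpleGraph

section Generic

lemma no_mono_triangle {V : Type*} {G : SimpleGraph V} {U : Set V}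
    (hU : (G.induce U).IsAcyclic) {a b d : V} (ha : a ∈ U) (hb : b ∈ U) (hd : d ∈ U)
    (hab : G.Adj a b) (had : G.Adj a d) (hbd : G.Adj b d) : False := by
  let A : U := ⟨a, ha⟩
  let B : U := ⟨b, hb⟩
  let D : U := ⟨d, hd⟩
  have hAB : (G.induce U).Adj A B := hab
  have hBD : (G.induce U).Adj B D := hbd
  have hDA : (G.induce U).Adj D A := had.symm
  have h1 : A ≠ B := Subtype.coe_ne_coe.mp hab.ne
  have h2 : B ≠ D := Subtype.coe_ne_coe.mp hbd.ne
  have h3 : A ≠ D := Subtype.coe_ne_coe.mp had.ne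
  have hcyc : (SimpleGraph.Walk.cons hAB (Walk.cons hBD (Walk.cons hDA Walk.nil))).IsCycle := by
    rw [Walk.isCycle_def, Walk.isTrail_def]
    refine ⟨?_, by simp, ?_⟩ <;> simp_all [Sym2.eq_iff] <;> tauto
  exact hU _ hcyc

lemma no_mono_pentagon {V : Type*} {G : SimpleGraph V} {U : Set V}
    (hU : (G.induce U).IsAcyclic) {a b d e f : V}
    (ha : a ∈ U) (hb : b ∈ U) (hd : d ∈ U) (he : e ∈ U) (hf : f ∈ U)
    (hab : G.Adj a b) (hbd : G.Adj b d) (hde : G.Adj d e) (hef : G.Adj e f) (hfa : G.Adj f a)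
    (nad : a ≠ d) (nae : a ≠ e) (nbe : b ≠ e) (nbf : b ≠ f) (ndf : d ≠ f) : False := by
  let A : U := ⟨a, ha⟩
  let B : U := ⟨b, hb⟩
  let D : U := ⟨d, hd⟩
  let E : U := ⟨e, he⟩
  let F : U := ⟨f, hf⟩
  have hAB : (G.induce U).Adj A B := hab
  have hBD : (G.induce U).Adj B D := hbd
  have hDE : (G.induce U).Adj D E := hde
  have hEF : (G.induce U).Adj E F := hef
  have hFA : (G.induce U).Adj F A := hfa
  have n1 : A ≠ B := Subtype.coe_ne_coe.mp hab.ne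
  have n2 : B ≠ D := Subtype.coe_ne_coe.mp hbd.ne
  have n3 : D ≠ E := Subtype.coe_ne_coe.mp hde.ne
  have n4 : E ≠ F := Subtype.coe_ne_coe.mp hef.ne
  have n5 : F ≠ A := Subtype.coe_ne_coe.mp hfa.ne
  have n6 : A ≠ D := Subtype.coe_ne_coe.mp nad
  have n7 : A ≠ E := Subtype.coe_ne_coe.mp nae
  have n8 : B ≠ E := Subtype.coe_ne_coe.mp nbe
  have n9 : B ≠ F := Subtype.coe_ne_coe.mp nbf
  have n10 : D ≠ F := Subtype.coe_ne_coe.mp ndf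
  have hcyc : (Walk.cons hAB (Walk.cons hBD (Walk.cons hDE (Walk.cons hEF
      (Walk.cons hFA Walk.nil))))).IsCycle := by
    rw [Walk.isCycle_def, Walk.isTrail_def]
    refine ⟨?_, by simp, ?_⟩ <;> simp_all [Sym2.eq_iff] <;> tauto
  exact hU _ hcyc

lemma no_mono_star {V : Type*} [Finite V] {G : SimpleGraph V} {U : Set V}
    (hU : ∀ v ∈ U, {w | w ∈ U ∧ G.Adj v w}.ncard ≤ 2) {v w1 w2 w3 : V}
    (hv : v ∈ U) (h1 : w1 ∈ U) (h2 : w2 ∈ U) (h3 : w3 ∈ U)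
    (a1 : G.Adj v w1) (a2 : G.Adj v w2) (a3 : G.Adj v w3)
    (d12 : w1 ≠ w2) (d13 : w1 ≠ w3) (d23 : w2 ≠ w3) : False := by
  have hsub : ({w1, w2, w3} : Set V) ⊆ {w | w ∈ U ∧ G.Adj v w} := by
    intro x hx
    rcases hx with rfl | rfl | rfl <;> exact ⟨by assumption, by assumption⟩
  have h3' : ({w1, w2, w3} : Set V).ncard = 3 :=
    Set.ncard_eq_three.2 ⟨w1, w2, w3, d12, d13, d23, rfl⟩
  have hle := Set.ncard_le_ncard hsub (Set.toFinite _)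
  have := hU v hv
  omega

end Generic

section Wrappers

lemma noTri (c : V12 → Bool) (hleg : IsLegal2Coloring CGraph c) {a b d : V12}
    (hab : CGraph.Adj a b) (had : CGraph.Adj a d) (hbd : CGraph.Adj b d) :
    ¬(c a = c b ∧ c a = c d) := by
  rintro ⟨h1, h2⟩
  cases hca : c a with
  | false =>
      exact no_mono_triangle hleg.2.1 hca (h1.symm.trans hca) (h2.symm.trans hca) hab had hbd
  | true =>
      exact no_mono_triangle hleg.1.1 hca (h1.symm.trans hca) (h2.symm.trans hca) hab had hbd

lemma noStar (c : V12 → Bool) (hleg : IsLegal2Coloring CGraph c) {v w1 w2 w3 : V12}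
    (a1 : CGraph.Adj v w1) (a2 : CGraph.Adj v w2) (a3 : CGraph.Adj v w3)
    (d12 : w1 ≠ w2) (d13 : w1 ≠ w3) (d23 : w2 ≠ w3) :
    ¬(c v = c w1 ∧ c v = c w2 ∧ c v = c w3) := by
  rintro ⟨h1, h2, h3⟩
  cases hcv : c v with
  | false =>
      exact no_mono_star hleg.2.2 hcv (h1.symm.trans hcv) (h2.symm.trans hcv) (h3.symm.trans hcv) a1 a2 a3 d12 d13 d23
  | true =>
      exact no_mono_star hleg.1.2 hcv (h1.symm.trans hcv) (h2.symm.trans hcv) (h3.symm.trans hcv) a1 a2 a3 d12 d13 d23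

lemma noPenta (c : V12 → Bool) (hleg : IsLegal2Coloring CGraph c) {a b d e f : V12}
    (hab : CGraph.Adj a b) (hbd : CGraph.Adj b d) (hde : CGraph.Adj d e)
    (hef : CGraph.Adj e f) (hfa : CGraph.Adj f a)
    (nad : a ≠ d) (nae : a ≠ e) (nbe : b ≠ e) (nbf : b ≠ f) (ndf : d ≠ f) :
    ¬(c a = c b ∧ c b = c d ∧ c d = c e ∧ c e = c f) := by
  rintro ⟨h1, h2, h3, h4⟩
  cases hca : c a with
  | false =>
      exact no_mono_pentagon hleg.2.1 hca (h1.symm.trans hca) (h2.symm.trans (h1.symm.trans hca)) (h3.symm.trans (h2.symm.trans (h1.symm.trans hca))) (h4.symm.trans (h3.symm.trans (h2.symm.trans (h1.symm.trans hca)))) hab hbd hde hef hfa nad nae nbe nbf ndf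
  | true =>
      exact no_mono_pentagon hleg.1.1 hca (h1.symm.trans hca) (h2.symm.trans (h1.symm.trans hca)) (h3.symm.trans (h2.symm.trans (h1.symm.trans hca))) (h4.symm.trans (h3.symm.trans (h2.symm.trans (h1.symm.trans hca)))) hab hbd hde hef hfa nad nae nbe nbf ndf

lemma adjC {a b : ℕ} (ha : a ∈ Finset.Icc 1 12) (hb : b ∈ Finset.Icc 1 12)
    (hne : a ≠ b) (h : (a, b) ∈ CEdges) : CGraph.Adj ⟨a, ha⟩ ⟨b, hb⟩ := by
  rw [CGraph, SimpleGraph.fromRel_adj]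
  exact ⟨fun he => hne (congrArg Subtype.val he), Or.inl h⟩

end Wrappers

lemma adj_1_2 : CGraph.Adj ⟨1, by decide⟩ ⟨2, by decide⟩ :=
  adjC (by decide) (by decide) (by decide) (by simp [CEdges, BEdges])

lemma adj_1_4 : CGraph.Adj ⟨1, by decide⟩ ⟨4, by decide⟩ :=
  adjC (by decide) (by decide) (by decide) (by simp [CEdges, BEdges])

lemma adj_1_5 : CGraph.Adj ⟨1, by decide⟩ ⟨5, by decide⟩ :=
  adjC (by decide) (by decide) (by decide) (by simp [CEdges, BEdges])

lemma adj_1_7 : CGraph.Adj ⟨1, by decide⟩ ⟨7, by decide⟩ :=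
  adjC (by decide) (by decide) (by decide) (by simp [CEdges, BEdges])

lemma adj_1_8 : CGraph.Adj ⟨1, by decide⟩ ⟨8, by decide⟩ :=
  adjC (by decide) (by decide) (by decide) (by simp [CEdges, BEdges])

lemma adj_2_3 : CGraph.Adj ⟨2, by decide⟩ ⟨3, by decide⟩ :=
  adjC (by decide) (by decide) (by decide) (by simp [CEdges, BEdges])

lemma adj_2_4 : CGraph.Adj ⟨2, by decide⟩ ⟨4, by decide⟩ :=
  adjC (by decide) (by decide) (by decide) (by simp [CEdges, BEdges])

lemma adj_2_5 : CGraph.Adj ⟨2, by decide⟩ ⟨5, by decide⟩ :=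
  adjC (by decide) (by decide) (by decide) (by simp [CEdges, BEdges])

lemma adj_2_6 : CGraph.Adj ⟨2, by decide⟩ ⟨6, by decide⟩ :=
  adjC (by decide) (by decide) (by decide) (by simp [CEdges, BEdges])

lemma adj_2_7 : CGraph.Adj ⟨2, by decide⟩ ⟨7, by decide⟩ :=
  adjC (by decide) (by decide) (by decide) (by simp [CEdges, BEdges])

lemma adj_3_4 : CGraph.Adj ⟨3, by decide⟩ ⟨4, by decide⟩ :=
  adjC (by decide) (by decide) (by decide) (by simp [CEdges, BEdges])

lemma adj_3_5 : CGraph.Adj ⟨3, by decide⟩ ⟨5, by decide⟩ :=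
  adjC (by decide) (by decide) (by decide) (by simp [CEdges, BEdges])

lemma adj_4_5 : CGraph.Adj ⟨4, by decide⟩ ⟨5, by decide⟩ :=
  adjC (by decide) (by decide) (by decide) (by simp [CEdges, BEdges])

lemma adj_4_6 : CGraph.Adj ⟨4, by decide⟩ ⟨6, by decide⟩ :=
  adjC (by decide) (by decide) (by decide) (by simp [CEdges, BEdges])

lemma adj_4_7 : CGraph.Adj ⟨4, by decide⟩ ⟨7, by decide⟩ :=
  adjC (by decide) (by decide) (by decide) (by simp [CEdges, BEdges])

lemma adj_6_7 : CGraph.Adj ⟨6, by decide⟩ ⟨7, by decide⟩ :=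
  adjC (by decide) (by decide) (by decide) (by simp [CEdges, BEdges])

lemma adj_7_12 : CGraph.Adj ⟨7, by decide⟩ ⟨12, by decide⟩ :=
  adjC (by decide) (by decide) (by decide) (by simp [CEdges, BEdges])

lemma adj_8_9 : CGraph.Adj ⟨8, by decide⟩ ⟨9, by decide⟩ :=
  adjC (by decide) (by decide) (by decide) (by simp [CEdges, BEdges])

lemma adj_9_10 : CGraph.Adj ⟨9, by decide⟩ ⟨10, by decide⟩ :=
  adjC (by decide) (by decide) (by decide) (by simp [CEdges, BEdges])

lemma adj_10_11 : CGraph.Adj ⟨10, by decide⟩ ⟨11, by decide⟩ :=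
  adjC (by decide) (by decide) (by decide) (by simp [CEdges, BEdges])

lemma adj_11_12 : CGraph.Adj ⟨11, by decide⟩ ⟨12, by decide⟩ :=
  adjC (by decide) (by decide) (by decide) (by simp [CEdges, BEdges])

lemma adj_8_12 : CGraph.Adj ⟨8, by decide⟩ ⟨12, by decide⟩ :=
  adjC (by decide) (by decide) (by decide) (by simp [CEdges, BEdges])

set_option maxHeartbeats 2000000 in
set_option synthInstance.maxHeartbeats 2000000 in
set_option synthInstance.maxSize 5000 in
lemma key : ∀ b1 b2 b3 b4 b5 b6 b7 b8 b9 b10 b11 b12 : Bool,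
    (¬(b1 = b2 ∧ b1 = b5) ∧ ¬(b4 = b6 ∧ b4 = b7) ∧ ¬(b3 = b4 ∧ b3 = b5) ∧
    ¬(b1 = b2 ∧ b1 = b4) ∧ ¬(b2 = b6 ∧ b2 = b7) ∧ ¬(b2 = b4 ∧ b2 = b5) ∧
    ¬(b1 = b4 ∧ b1 = b7) ∧ ¬(b2 = b3 ∧ b2 = b4) ∧ ¬(b1 = b4 ∧ b1 = b5) ∧
    ¬(b2 = b4 ∧ b2 = b6) ∧ ¬(b1 = b2 ∧ b1 = b7) ∧ ¬(b2 = b3 ∧ b2 = b5) ∧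
    ¬(b2 = b4 ∧ b2 = b7) ∧
    ¬(b2 = b1 ∧ b2 = b3 ∧ b2 = b6) ∧ ¬(b4 = b1 ∧ b4 = b3 ∧ b4 = b6) ∧
    ¬(b1 = b5 ∧ b1 = b7 ∧ b1 = b8) ∧ ¬(b7 = b1 ∧ b7 = b6 ∧ b7 = b12) ∧
    ¬(b8 = b9 ∧ b9 = b10 ∧ b10 = b11 ∧ b11 = b12) ∧
    b8 = false) →
    b12 = false ∧ b1 = true ∧ b2 = false ∧ b3 = true ∧ b4 = false ∧ b5 = true ∧
      b6 = true ∧ b7 = true ∧ ¬(b9 = false ∧ b10 = false ∧ b11 = false) := by decide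

/-- Every legal 2-coloring `c` of the clause gadget `C` with `c 8 = white` satisfies:
`c 12 = white`, the restriction of `c` to {1,…,7} has gray class exactly {1,3,5,6,7},
and the vertices 9, 10, 11 are not all white. -/
theorem stmt2 (c : V12 → Bool) (hleg : IsLegal2Coloring CGraph c)
    (h8 : c ⟨8, by decide⟩ = false) :
    c ⟨12, by decide⟩ = false ∧
    (∀ v : V12, v.val ≤ 7 → (c v = true ↔ v.val ∈ ({1,3,5,6,7} : Set ℕ))) ∧
    ¬ (c ⟨9, by decide⟩ = false ∧ c ⟨10, by decide⟩ = false ∧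
        c ⟨11, by decide⟩ = false) := by
  have t1 := noTri c hleg adj_1_2 adj_1_5 adj_2_5
  have t2 := noTri c hleg adj_4_6 adj_4_7 adj_6_7
  have t3 := noTri c hleg adj_3_4 adj_3_5 adj_4_5
  have t4 := noTri c hleg adj_1_2 adj_1_4 adj_2_4
  have t5 := noTri c hleg adj_2_6 adj_2_7 adj_6_7
  have t6 := noTri c hleg adj_2_4 adj_2_5 adj_4_5
  have t7 := noTri c hleg adj_1_4 adj_1_7 adj_4_7
  have t8 := noTri c hleg adj_2_3 adj_2_4 adj_3_4
  have t9 := noTri c hleg adj_1_4 adj_1_5 adj_4_5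
  have t10 := noTri c hleg adj_2_4 adj_2_6 adj_4_6
  have t11 := noTri c hleg adj_1_2 adj_1_7 adj_2_7
  have t12 := noTri c hleg adj_2_3 adj_2_5 adj_3_5
  have t13 := noTri c hleg adj_2_4 adj_2_7 adj_4_7
  have s1 := noStar c hleg adj_1_2.symm adj_2_3 adj_2_6 (by decide) (by decide) (by decide)
  have s2 := noStar c hleg adj_1_4.symm adj_3_4.symm adj_4_6 (by decide) (by decide) (by decide)
  have s3 := noStar c hleg adj_1_5 adj_1_7 adj_1_8 (by decide) (by decide) (by decide)
  have s4 := noStar c hleg adj_1_7.symm adj_6_7.symm adj_7_12 (by decide) (by decide) (by decide)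
  have p := noPenta c hleg adj_8_9 adj_9_10 adj_10_11 adj_11_12 adj_8_12.symm
    (by decide) (by decide) (by decide) (by decide) (by decide)
  obtain ⟨hb12, hb1, hb2, hb3, hb4, hb5, hb6, hb7, h911⟩ :=
    key (c ⟨1, by decide⟩) (c ⟨2, by decide⟩) (c ⟨3, by decide⟩) (c ⟨4, by decide⟩)
      (c ⟨5, by decide⟩) (c ⟨6, by decide⟩) (c ⟨7, by decide⟩) (c ⟨8, by decide⟩)
      (c ⟨9, by decide⟩) (c ⟨10, by decide⟩) (c ⟨11, by decide⟩) (c ⟨12, by decide⟩)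
      ⟨t1, t2, t3, t4, t5, t6, t7, t8, t9, t10, t11, t12, t13, s1, s2, s3, s4, p, h8⟩
  refine ⟨hb12, ?_, h911⟩
  rintro ⟨n, hn⟩ hv
  have hv' : n ≤ 7 := hv
  have h1n : 1 ≤ n := (Finset.mem_Icc.mp hn).1
  interval_cases n
  · exact iff_of_true hb1 (by norm_num)
  · exact iff_of_false (fun h => Bool.noConfusion (hb2.symm.trans h)) (by norm_num)
  · exact iff_of_true hb3 (by norm_num)
  · exact iff_of_false (fun h => Bool.noConfusion (hb4.symm.trans h)) (by norm_num)
  · exact iff_of_true hb5 (by norm_num)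
  · exact iff_of_true hb6 (by norm_num)
  · exact iff_of_true hb7 (by norm_num)
end

section
/- Let K5^- be the graph obtained from the complete graph on vertex set {1,2,3,4,5} by deleting the edge {1,2} (so that 1 and 2 are its two vertices of degree 3). In every legal 2-coloring of K5^-, the vertices 1 and 2 receive the same color. -/
/-- Vertex set {1, …, 5}. -/
abbrev V5 : Type := {m : ℕ // m ∈ Finset.Icc 1 5}

/-- `K5⁻`: the complete graph on {1,…,5} minus the edge {1,2}
(so 1 and 2 are its two vertices of degree 3). -/
def K5minus : SimpleGraph V5 :=
  SimpleGraph.fromRel (fun u v => ¬ ((u.val, v.val) = (1,2) ∨ (u.val, v.val) = (2,1)))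

lemma triangle_not_acyclic {V : Type*} {G : SimpleGraph V} {U : Set V}
    (hU : (G.induce U).IsAcyclic) {a b c : V} (ha : a ∈ U) (hb : b ∈ U) (hc : c ∈ U)
    (hab : G.Adj a b) (hbc : G.Adj b c) (hca : G.Adj c a) : False := by
  have hab' : (G.induce U).Adj ⟨a, ha⟩ ⟨b, hb⟩ := hab
  have hbc' : (G.induce U).Adj ⟨b, hb⟩ ⟨c, hc⟩ := hbc
  have hca' : (G.induce U).Adj ⟨c, hc⟩ ⟨a, ha⟩ := hca
  have h1 : a ≠ b := hab.ne
  have h2 : b ≠ c := hbc.ne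
  have h3 : c ≠ a := hca.ne
  refine hU (.cons hab' (.cons hbc' (.cons hca' .nil))) ?_
  rw [SimpleGraph.Walk.isCycle_def, SimpleGraph.Walk.isTrail_def]
  refine ⟨?_, by simp, ?_⟩
  · simp [Sym2.eq, Sym2.rel_iff', Subtype.ext_iff, Prod.ext_iff]
    tauto
  · simp [Subtype.ext_iff]
    tauto

/-- In every legal 2-coloring of `K5⁻`, the vertices 1 and 2 receive the same color. -/
theorem stmt7 (c : V5 → Bool) (hleg : IsLegal2Coloring K5minus c) :
    c ⟨1, by decide⟩ = c ⟨2, by decide⟩ := by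
  by_contra hne
  set v1 : V5 := ⟨1, by decide⟩
  set v2 : V5 := ⟨2, by decide⟩
  set v3 : V5 := ⟨3, by decide⟩
  set v4 : V5 := ⟨4, by decide⟩
  set v5 : V5 := ⟨5, by decide⟩
  have a13 : K5minus.Adj v1 v3 := by rw [K5minus, SimpleGraph.fromRel_adj]; decide
  have a14 : K5minus.Adj v1 v4 := by rw [K5minus, SimpleGraph.fromRel_adj]; decide
  have a15 : K5minus.Adj v1 v5 := by rw [K5minus, SimpleGraph.fromRel_adj]; decide
  have a23 : K5minus.Adj v2 v3 := by rw [K5minus, SimpleGraph.fromRel_adj]; decide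
  have a24 : K5minus.Adj v2 v4 := by rw [K5minus, SimpleGraph.fromRel_adj]; decide
  have a25 : K5minus.Adj v2 v5 := by rw [K5minus, SimpleGraph.fromRel_adj]; decide
  have a34 : K5minus.Adj v3 v4 := by rw [K5minus, SimpleGraph.fromRel_adj]; decide
  have a35 : K5minus.Adj v3 v5 := by rw [K5minus, SimpleGraph.fromRel_adj]; decide
  have a45 : K5minus.Adj v4 v5 := by rw [K5minus, SimpleGraph.fromRel_adj]; decide
  obtain ⟨⟨hT, -⟩, ⟨hF, -⟩⟩ := hleg
  have mono : ∀ z x y : V5, c x = c z → c y = c z → K5minus.Adj z x → K5minus.Adj x y →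
      K5minus.Adj y z → False := by
    intro z x y hx hy hzx hxy hyz
    cases hz : c z with
    | false => exact triangle_not_acyclic hF hz (hx.trans hz) (hy.trans hz) hzx hxy hyz
    | true => exact triangle_not_acyclic hT hz (hx.trans hz) (hy.trans hz) hzx hxy hyz
  have key : ∀ x y : V5, K5minus.Adj v1 x → K5minus.Adj v1 y → K5minus.Adj v2 x →
      K5minus.Adj v2 y → K5minus.Adj x y → c x = c y → False := by
    intro x y h1x h1y h2x h2y hxy hcxy
    have h : c x = c v1 ∨ c x = c v2 := by
      clear * - hne
      cases hb : c x <;> cases hb1 : c v1 <;> cases hb2 : c v2 <;> simp_all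
    rcases h with h | h
    · exact mono v1 x y h (hcxy.symm.trans h) h1x hxy h1y.symm
    · exact mono v2 x y h (hcxy.symm.trans h) h2x hxy h2y.symm
  by_cases h34 : c v3 = c v4
  · exact key v3 v4 a13 a14 a23 a24 a34 h34
  by_cases h35 : c v3 = c v5
  · exact key v3 v5 a13 a15 a23 a25 a35 h35
  have h45 : c v4 = c v5 := by
    clear * - h34 h35
    cases hb3 : c v3 <;> cases hb4 : c v4 <;> cases hb5 : c v5 <;> simp_all
  exact key v4 v5 a14 a15 a24 a25 a45 h45
end

section
/- Let V'_a be the simple graph on vertex set {1,2,...,10} with edge set: all edges of the complete graph on {1,2,3,4,5} except {1,2}, together with {6,7},{1,6},{2,6},{1,7},{2,7},{3,8},{6,8},{7,8},{5,9},{6,9},{7,9},{4,10}. Then a 2-coloring c of V'_a in which at least one of the vertices 8, 9 is white is a legal 2-coloring of V'_a if and only if its white class is exactly {1,2,4,8,9} (and its gray class is {3,5,6,7,10}). In particular, the two vertices 8 and 9 (labeled a) have the same color, vertex 10 (labeled ā) has the other color, and each of 8, 9, 10 has a color different from all of its neighbors in V'_a. -/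
/-- Vertex set {1, …, 10}. -/
abbrev V10 : Type := {m : ℕ // m ∈ Finset.Icc 1 10}

/-- The edge set of the variable gadget `V'_a` of the maximum-degree-5 reduction:
all edges of the complete graph on {1,…,5} except {1,2}, together with
{6,7},{1,6},{2,6},{1,7},{2,7},{3,8},{6,8},{7,8},{5,9},{6,9},{7,9},{4,10}. -/
def Va'Edges : Set (ℕ × ℕ) :=
  {(1,3),(1,4),(1,5),(2,3),(2,4),(2,5),(3,4),(3,5),(4,5),
   (6,7),(1,6),(2,6),(1,7),(2,7),(3,8),(6,8),(7,8),(5,9),(6,9),(7,9),(4,10)}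

/-- The variable gadget `V'_a` on vertex set {1, …, 10}. -/
def Va'Graph : SimpleGraph V10 :=
  SimpleGraph.fromRel (fun u v => (u.val, v.val) ∈ Va'Edges)

instance decVaE : DecidablePred (· ∈ Va'Edges) := fun p =>
  decidable_of_iff (p ∈ ([(1,3),(1,4),(1,5),(2,3),(2,4),(2,5),(3,4),(3,5),(4,5),
   (6,7),(1,6),(2,6),(1,7),(2,7),(3,8),(6,8),(7,8),(5,9),(6,9),(7,9),(4,10)] : List (ℕ×ℕ)))
    (by simp [Va'Edges])

instance decAdj : DecidableRel Va'Graph.Adj := fun u v =>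
  decidable_of_iff (u ≠ v ∧ ((u.val, v.val) ∈ Va'Edges ∨ (v.val, u.val) ∈ Va'Edges))
    (by rw [Va'Graph, SimpleGraph.fromRel_adj])

/-- The coloring determined by ten booleans. -/
def cOf (b1 b2 b3 b4 b5 b6 b7 b8 b9 b10 : Bool) : V10 → Bool := fun v =>
  if v.val = 1 then b1 else if v.val = 2 then b2 else if v.val = 3 then b3
  else if v.val = 4 then b4 else if v.val = 5 then b5 else if v.val = 6 then b6
  else if v.val = 7 then b7 else if v.val = 8 then b8 else if v.val = 9 then b9 else b10

/-- The unique legal coloring. -/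
def c0 : V10 → Bool := cOf false false true false true true true false false true

/- ### Cycle lemmas -/

lemma isCycle_tri {V : Type*} {G : SimpleGraph V} {a b d : V}
    (h1 : G.Adj a b) (h2 : G.Adj b d) (h3 : G.Adj d a) :
    (SimpleGraph.Walk.cons h1 (SimpleGraph.Walk.cons h2
      (SimpleGraph.Walk.cons h3 SimpleGraph.Walk.nil))).IsCycle := by
  have nab := h1.ne; have nbd := h2.ne; have nda := h3.ne
  simp [SimpleGraph.Walk.isCycle_def, SimpleGraph.Walk.isTrail_def, Sym2.eq_iff,
    List.nodup_cons]
  tauto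

lemma isCycle_quad {V : Type*} {G : SimpleGraph V} {a b d e : V}
    (h1 : G.Adj a b) (h2 : G.Adj b d) (h3 : G.Adj d e) (h4 : G.Adj e a)
    (had : a ≠ d) (hbe : b ≠ e) :
    (SimpleGraph.Walk.cons h1 (SimpleGraph.Walk.cons h2 (SimpleGraph.Walk.cons h3
      (SimpleGraph.Walk.cons h4 SimpleGraph.Walk.nil)))).IsCycle := by
  have nab := h1.ne; have nbd := h2.ne; have nde := h3.ne; have nea := h4.ne
  simp [SimpleGraph.Walk.isCycle_def, SimpleGraph.Walk.isTrail_def, Sym2.eq_iff,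
    List.nodup_cons]
  tauto

lemma mono_tri {U : Set V10} (hA : (Va'Graph.induce U).IsAcyclic) {a b d : V10}
    (ha : a ∈ U) (hb : b ∈ U) (hd : d ∈ U)
    (h1 : Va'Graph.Adj a b) (h2 : Va'Graph.Adj b d) (h3 : Va'Graph.Adj d a) : False := by
  have h1' : (Va'Graph.induce U).Adj ⟨a, ha⟩ ⟨b, hb⟩ := h1
  have h2' : (Va'Graph.induce U).Adj ⟨b, hb⟩ ⟨d, hd⟩ := h2
  have h3' : (Va'Graph.induce U).Adj ⟨d, hd⟩ ⟨a, ha⟩ := h3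
  exact hA _ (isCycle_tri h1' h2' h3')

lemma mono_quad {U : Set V10} (hA : (Va'Graph.induce U).IsAcyclic) {a b d e : V10}
    (ha : a ∈ U) (hb : b ∈ U) (hd : d ∈ U) (he : e ∈ U)
    (h1 : Va'Graph.Adj a b) (h2 : Va'Graph.Adj b d) (h3 : Va'Graph.Adj d e)
    (h4 : Va'Graph.Adj e a) (had : a ≠ d) (hbe : b ≠ e) : False := by
  have h1' : (Va'Graph.induce U).Adj ⟨a, ha⟩ ⟨b, hb⟩ := h1
  have h2' : (Va'Graph.induce U).Adj ⟨b, hb⟩ ⟨d, hd⟩ := h2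
  have h3' : (Va'Graph.induce U).Adj ⟨d, hd⟩ ⟨e, he⟩ := h3
  have h4' : (Va'Graph.induce U).Adj ⟨e, he⟩ ⟨a, ha⟩ := h4
  exact hA _ (isCycle_quad h1' h2' h3' h4'
    (fun h => had (congrArg Subtype.val h)) (fun h => hbe (congrArg Subtype.val h)))

/- ### Acyclicity from a small edge bound -/

lemma acyclic_of_edges_mapsto {V W : Type*} [DecidableEq W] (G : SimpleGraph V)
    (f : V → W) (hf : Function.Injective f) (S : Finset (Sym2 W)) (hS : S.card ≤ 2)
    (h : ∀ a b, G.Adj a b → s(f a, f b) ∈ S) : G.IsAcyclic := by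
  intro v p hp
  have h3 := hp.three_le_length
  have hnodup : (p.edges.map (Sym2.map f)).Nodup :=
    hp.edges_nodup.map (Sym2.map.injective hf)
  have hsub : ∀ e ∈ p.edges.map (Sym2.map f), e ∈ S := by
    intro e he
    rw [List.mem_map] at he
    obtain ⟨e', he', rfl⟩ := he
    have hE : e' ∈ G.edgeSet := p.edges_subset_edgeSet he'
    induction e' with
    | _ x y => exact h x y hE
  have hlen : (p.edges.map (Sym2.map f)).length ≤ S.card := by
    classical
    rw [← List.toFinset_card_of_nodup hnodup]
    exact Finset.card_le_card (fun e he => hsub e (List.mem_toFinset.mp he))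
  rw [List.length_map, SimpleGraph.Walk.length_edges] at hlen
  omega

/- ### ncard to Finset card -/

lemma ncard_to_filter (c : V10 → Bool) (v : V10) (b : Bool) :
    {w | w ∈ {x : V10 | c x = b} ∧ Va'Graph.Adj v w}.ncard
      = (Finset.univ.filter fun w => c w = b ∧ Va'Graph.Adj v w).card := by
  rw [Set.ncard_eq_toFinset_card']
  simp [Set.toFinset_setOf]

/- ### The key finite check -/

set_option maxRecDepth 1000000
set_option synthInstance.maxSize 1000000
set_option synthInstance.maxHeartbeats 0
set_option maxHeartbeats 8000000

lemma key_s9 : ∀ b1 b2 b3 b4 b5 b6 b7 b8 b9 b10 : Bool,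
    (∀ v : V10, (Finset.univ.filter fun w =>
        cOf b1 b2 b3 b4 b5 b6 b7 b8 b9 b10 w = cOf b1 b2 b3 b4 b5 b6 b7 b8 b9 b10 v ∧
        Va'Graph.Adj v w).card ≤ 2) →
    (∀ a b : V10, Va'Graph.Adj a b → ∀ d : V10, Va'Graph.Adj b d → Va'Graph.Adj d a →
      ¬(cOf b1 b2 b3 b4 b5 b6 b7 b8 b9 b10 a = cOf b1 b2 b3 b4 b5 b6 b7 b8 b9 b10 b ∧
        cOf b1 b2 b3 b4 b5 b6 b7 b8 b9 b10 b = cOf b1 b2 b3 b4 b5 b6 b7 b8 b9 b10 d)) →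
    (∀ a b : V10, Va'Graph.Adj a b → ∀ d : V10, Va'Graph.Adj b d → ∀ e : V10,
      Va'Graph.Adj d e → Va'Graph.Adj e a → a ≠ d → b ≠ e →
      ¬(cOf b1 b2 b3 b4 b5 b6 b7 b8 b9 b10 a = cOf b1 b2 b3 b4 b5 b6 b7 b8 b9 b10 b ∧
        cOf b1 b2 b3 b4 b5 b6 b7 b8 b9 b10 b = cOf b1 b2 b3 b4 b5 b6 b7 b8 b9 b10 d ∧
        cOf b1 b2 b3 b4 b5 b6 b7 b8 b9 b10 d = cOf b1 b2 b3 b4 b5 b6 b7 b8 b9 b10 e)) →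
    (b8 = false ∨ b9 = false) →
    b1 = false ∧ b2 = false ∧ b3 = true ∧ b4 = false ∧ b5 = true ∧ b6 = true ∧
    b7 = true ∧ b8 = false ∧ b9 = false ∧ b10 = true := by decide

/- ### Any coloring is a `cOf` -/

lemma eq_cOf (c : V10 → Bool) :
    c = cOf (c ⟨1, by decide⟩) (c ⟨2, by decide⟩) (c ⟨3, by decide⟩) (c ⟨4, by decide⟩)
      (c ⟨5, by decide⟩) (c ⟨6, by decide⟩) (c ⟨7, by decide⟩) (c ⟨8, by decide⟩)
      (c ⟨9, by decide⟩) (c ⟨10, by decide⟩) := by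
  funext v
  obtain ⟨m, hm⟩ := v
  have hm' := Finset.mem_Icc.mp hm
  obtain ⟨hm1, hm2⟩ := hm'
  interval_cases m <;> rfl

/- ### Forward: legality forces the coloring -/

lemma legal_forces (c : V10 → Bool)
    (h89 : c ⟨8, by decide⟩ = false ∨ c ⟨9, by decide⟩ = false)
    (hL : IsLegal2Coloring Va'Graph c) : c = c0 := by
  obtain ⟨⟨hAt, hDt⟩, ⟨hAf, hDf⟩⟩ := hL
  have hdeg : ∀ v : V10,
      (Finset.univ.filter fun w => c w = c v ∧ Va'Graph.Adj v w).card ≤ 2 := by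
    intro v
    rcases hv : c v with _ | _
    · have h2 := hDf v hv
      rw [ncard_to_filter c v false] at h2
      simpa [hv] using h2
    · have h2 := hDt v hv
      rw [ncard_to_filter c v true] at h2
      simpa [hv] using h2
  have htri : ∀ a b : V10, Va'Graph.Adj a b → ∀ d : V10, Va'Graph.Adj b d →
      Va'Graph.Adj d a → ¬(c a = c b ∧ c b = c d) := by
    rintro a b hab d hbd hda ⟨e1, e2⟩
    rcases hv : c a with _ | _
    · exact mono_tri hAf hv (e1.symm.trans hv) ((e1.trans e2).symm.trans hv) hab hbd hda
    · exact mono_tri hAt hv (e1.symm.trans hv) ((e1.trans e2).symm.trans hv) hab hbd hda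
  have hquad : ∀ a b : V10, Va'Graph.Adj a b → ∀ d : V10, Va'Graph.Adj b d →
      ∀ e : V10, Va'Graph.Adj d e → Va'Graph.Adj e a → a ≠ d → b ≠ e →
      ¬(c a = c b ∧ c b = c d ∧ c d = c e) := by
    rintro a b hab d hbd e hde hea had hbe ⟨e1, e2, e3⟩
    rcases hv : c a with _ | _
    · exact mono_quad hAf hv (e1.symm.trans hv) ((e1.trans e2).symm.trans hv)
        ((e1.trans (e2.trans e3)).symm.trans hv) hab hbd hde hea had hbe
    · exact mono_quad hAt hv (e1.symm.trans hv) ((e1.trans e2).symm.trans hv)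
        ((e1.trans (e2.trans e3)).symm.trans hv) hab hbd hde hea had hbe
  have hc := eq_cOf c
  rw [hc] at hdeg htri hquad
  obtain ⟨e1, e2, e3, e4, e5, e6, e7, e8, e9, e10⟩ :=
    key_s9 _ _ _ _ _ _ _ _ _ _ hdeg htri hquad h89
  rw [e1, e2, e3, e4, e5, e6, e7, e8, e9, e10] at hc
  exact hc

/- ### The unique coloring is legal -/

lemma c0_legal : IsLegal2Coloring Va'Graph c0 := by
  constructor
  · constructor
    · apply acyclic_of_edges_mapsto (f := fun x : {v : V10 // v ∈ {v : V10 | c0 v = true}} => x.val.val)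
        (S := ({s(3,5), s(6,7)} : Finset (Sym2 ℕ)))
      · exact fun x y h => Subtype.ext (Subtype.ext h)
      · decide
      · have aux : ∀ x y : V10, c0 x = true → c0 y = true → Va'Graph.Adj x y →
            s(x.val, y.val) ∈ ({s(3,5), s(6,7)} : Finset (Sym2 ℕ)) := by decide
        intro a b hab
        exact aux a.val b.val a.prop b.prop hab
    · intro v hv
      rw [ncard_to_filter c0 v true]
      have hv' : c0 v = true := hv
      revert hv'
      revert v
      decide
  · constructor
    · apply acyclic_of_edges_mapsto (f := fun x : {v : V10 // v ∈ {v : V10 | c0 v = false}} => x.val.val)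
        (S := ({s(1,4), s(2,4)} : Finset (Sym2 ℕ)))
      · exact fun x y h => Subtype.ext (Subtype.ext h)
      · decide
      · have aux : ∀ x y : V10, c0 x = false → c0 y = false → Va'Graph.Adj x y →
            s(x.val, y.val) ∈ ({s(1,4), s(2,4)} : Finset (Sym2 ℕ)) := by decide
        intro a b hab
        exact aux a.val b.val a.prop b.prop hab
    · intro v hv
      rw [ncard_to_filter c0 v false]
      have hv' : c0 v = false := hv
      revert hv'
      revert v
      decide

/- ### The white class of `c0` -/

lemma c0_white : {v : V10 | c0 v = false} = {v : V10 | v.val ∈ ({1,2,4,8,9} : Set ℕ)} := by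
  ext ⟨m, hm⟩
  have hm' := Finset.mem_Icc.mp hm
  obtain ⟨hm1, hm2⟩ := hm'
  simp only [Set.mem_setOf_eq, Set.mem_insert_iff, Set.mem_singleton_iff]
  interval_cases m <;> simp [c0, cOf]

lemma white_forces (c : V10 → Bool)
    (h : {v : V10 | c v = false} = {v : V10 | v.val ∈ ({1,2,4,8,9} : Set ℕ)}) : c = c0 := by
  have hiff := Set.ext_iff.mp h
  funext v
  obtain ⟨m, hm⟩ := v
  have := hiff ⟨m, hm⟩
  simp only [Set.mem_setOf_eq, Set.mem_insert_iff, Set.mem_singleton_iff] at this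
  have hm' := Finset.mem_Icc.mp hm
  obtain ⟨hm1, hm2⟩ := hm'
  interval_cases m <;> simp_all [c0, cOf]


/-- A 2-coloring `c` of `V'_a` in which at least one of the vertices 8, 9 is white is
a legal 2-coloring iff its white class is exactly {1,2,4,8,9} (and its gray class is
{3,5,6,7,10}).  In particular, vertices 8 and 9 have the same color, vertex 10 has
the other color, and each of 8, 9, 10 has a color different from all of its
neighbors in `V'_a`. -/
theorem stmt9 (c : V10 → Bool)
    (h89 : c ⟨8, by decide⟩ = false ∨ c ⟨9, by decide⟩ = false) :
    (IsLegal2Coloring Va'Graph c ↔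
      {v : V10 | c v = false} = {v : V10 | v.val ∈ ({1,2,4,8,9} : Set ℕ)}) ∧
    (IsLegal2Coloring Va'Graph c →
      c ⟨8, by decide⟩ = c ⟨9, by decide⟩ ∧
      c ⟨10, by decide⟩ ≠ c ⟨8, by decide⟩ ∧
      (∀ w, Va'Graph.Adj ⟨8, by decide⟩ w → c w ≠ c ⟨8, by decide⟩) ∧
      (∀ w, Va'Graph.Adj ⟨9, by decide⟩ w → c w ≠ c ⟨9, by decide⟩) ∧
      (∀ w, Va'Graph.Adj ⟨10, by decide⟩ w → c w ≠ c ⟨10, by decide⟩)) := by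
  constructor
  · constructor
    · intro hL
      rw [legal_forces c h89 hL]
      exact c0_white
    · intro hset
      rw [white_forces c hset]
      exact c0_legal
  · intro hL
    have hc := legal_forces c h89 hL
    subst hc
    refine ⟨by decide, by decide, by decide, by decide, by decide⟩
end

section
/- Let G be a finite simple graph and k a positive integer. Then the vertex set of G can be partitioned into at most k sets each inducing a linear forest if and only if there exist a coloring c : V(G) → {1,...,k} and a linear order ≺ on V(G) such that for every edge {u,w} of G with c(u) = c(w), the vertices u and w are consecutive in ≺ (i.e., there is no vertex v with u ≺ v ≺ w or w ≺ v ≺ u). -/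
namespace SimpleGraph

variable {V W α : Type*}

/-- Degrees are measured with `encard`, so that an infinite neighbourhood is not read as `0`. -/
def IsLinearForest (H : SimpleGraph W) : Prop :=
  H.IsAcyclic ∧ ∀ v, (H.neighborSet v).encard ≤ 2

lemma IsLinearForest.comap {H : SimpleGraph V} {H' : SimpleGraph W} (f : H →g H')
    (hf : Function.Injective f) (h : H'.IsLinearForest) : H.IsLinearForest := by
  refine ⟨h.1.comap f hf, fun v => ?_⟩
  calc (H.neighborSet v).encard = (f '' H.neighborSet v).encard := (hf.encard_image _).symm
    _ ≤ (H'.neighborSet (f v)).encard :=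
      Set.encard_le_encard (Set.image_subset_iff.2 fun _ hw => f.map_adj hw)
    _ ≤ 2 := h.2 _

section LinearOrder

variable [LinearOrder α]

lemma hasse_adj_iff_not_exists_between {a b : α} (hab : a ≠ b) :
    (hasse α).Adj a b ↔ ¬∃ c, (a < c ∧ c < b) ∨ (b < c ∧ c < a) := by
  rcases hab.lt_or_gt with h | h <;> grind [hasse_adj, CovBy]

lemma encard_neighborSet_hasse_le_two (a : α) : ((hasse α).neighborSet a).encard ≤ 2 := by
  have hsub : (hasse α).neighborSet a ⊆ {b | a ⋖ b} ∪ {b | b ⋖ a} := fun _ hb => hb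
  have hup : {b | a ⋖ b}.encard ≤ 1 :=
    Set.encard_le_one_iff_subsingleton.2 fun _ hb _ hc => hb.unique_right hc
  have hdown : {b | b ⋖ a}.encard ≤ 1 :=
    Set.encard_le_one_iff_subsingleton.2 fun _ hb _ hc => hb.unique_left hc
  calc _ ≤ ({b | a ⋖ b} ∪ {b | b ⋖ a}).encard := Set.encard_le_encard hsub
    _ ≤ {b | a ⋖ b}.encard + {b | b ⋖ a}.encard := Set.encard_union_le _ _
    _ ≤ 1 + 1 := add_le_add hup hdown
    _ = 2 := one_add_one_eq_two

lemma mem_edges_of_walk_hasse {a b : α} (hab : a ⋖ b) :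
    ∀ {x y : α} (p : (hasse α).Walk x y), x ≤ a → b ≤ y → s(a, b) ∈ p.edges
  | _, _, .nil, hx, hy => absurd (hx.trans_lt (hab.lt.trans_le hy)) (lt_irrefl _)
  | x, _, .cons (v := x') hxx' p, hx, hy => by
    rw [Walk.edges_cons, List.mem_cons]
    by_cases hx' : x' ≤ a
    · exact .inr (mem_edges_of_walk_hasse hab p hx' hy)
    · rw [not_le] at hx'
      have hcov : x ⋖ x' := hxx'.resolve_right fun h => (h.lt.trans_le hx).not_gt hx'
      obtain rfl : x = a := hx.eq_of_not_lt fun h => hcov.2 h hx'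
      exact .inl (by rw [hcov.unique_right hab])

lemma isAcyclic_hasse : (hasse α).IsAcyclic := by
  refine isAcyclic_iff_forall_adj_isBridge.2 fun a b hab =>
    isBridge_iff_forall_walk_mem_edges.2 fun p => ?_
  rcases hab with h | h
  · exact mem_edges_of_walk_hasse h p le_rfl le_rfl
  · simpa [Sym2.eq_swap] using mem_edges_of_walk_hasse h p.reverse le_rfl le_rfl

lemma isLinearForest_hasse : (hasse α).IsLinearForest :=
  ⟨isAcyclic_hasse, encard_neighborSet_hasse_le_two⟩

end LinearOrder

lemma hasse_toLex_adj {β : Type*} [Preorder α] [Preorder β] (a : α) {b b' : β}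
    (h : (hasse β).Adj b b') : (hasse (α ×ₗ β)).Adj (toLex (a, b)) (toLex (a, b')) := by
  simp only [hasse_adj, Prod.Lex.toLex_covBy_toLex_iff] at h ⊢
  tauto

lemma IsAcyclic.exists_subsingleton_neighborSet [Finite V] [Nonempty V] {H : SimpleGraph V}
    (h : H.IsAcyclic) : ∃ v, (H.neighborSet v).Subsingleton := by
  classical
  have := Fintype.ofFinite V
  have : Nonempty (Σ u w, H.Path u w) := ⟨⟨Classical.arbitrary V, _, Path.nil⟩⟩
  obtain ⟨⟨u, w, p⟩, hp⟩ := Finite.exists_max fun q : Σ u w, H.Path u w => q.2.2.1.length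
  have mem_support : ∀ x ∈ H.neighborSet u, x ∈ p.1.support := fun x hx => by
    by_contra hx'
    simpa using hp ⟨x, w, ⟨.cons hx.symm p.1, p.2.cons hx'⟩⟩
  refine ⟨u, fun x hx y hy => ?_⟩
  rw [h.eq_snd_of_adj_start p.2 hx (mem_support x hx),
    h.eq_snd_of_adj_start p.2 hy (mem_support y hy)]

lemma IsAcyclic.exists_subsingleton_neighborSet_inter {H : SimpleGraph V} (h : H.IsAcyclic)
    {s : Set V} (hs : s.Finite) (hne : s.Nonempty) :
    ∃ v ∈ s, (H.neighborSet v ∩ s).Subsingleton := by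
  have := hs.to_subtype
  have := hne.to_subtype
  obtain ⟨⟨v, hv⟩, hsub⟩ := (h.induce s).exists_subsingleton_neighborSet
  refine ⟨v, hv, fun x hx y hy => ?_⟩
  exact congrArg Subtype.val (@hsub ⟨x, hx.2⟩ hx.1 ⟨y, hy.2⟩ hy.1)

lemma exists_numbering_of_erase [DecidableEq W] {H : SimpleGraph W} {s : Finset W} {v : W}
    {f : W → ℕ} (hf_inj : Set.InjOn f (s.erase v))
    (hf_adj : ∀ x ∈ s.erase v, ∀ y ∈ s.erase v, H.Adj x y → (hasse ℕ).Adj (f x) (f y))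
    (hf_nbr : ∀ y ∈ s.erase v, H.Adj v y → f y = 0) :
    ∃ g : W → ℕ, Set.InjOn g s ∧ g v = 0 ∧
      ∀ x ∈ s, ∀ y ∈ s, H.Adj x y → (hasse ℕ).Adj (g x) (g y) := by
  have hs' : ∀ {x}, x ∈ s.erase v ↔ x ≠ v ∧ x ∈ s := Finset.mem_erase
  refine ⟨fun x => if x = v then 0 else f x + 1, ?_, if_pos rfl, ?_⟩
  · intro x hx y hy hxy
    simp only at hxy
    split_ifs at hxy with hxv hyv hyv
    · exact hxv.trans hyv.symm
    · exact hf_inj (hs'.2 ⟨hxv, hx⟩) (hs'.2 ⟨hyv, hy⟩) (by omega)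
  · intro x hx y hy hxy
    simp only [hasse_adj, Nat.covBy_iff_add_one_eq]
    split_ifs with hxv hyv hyv
    · exact absurd (hxv.trans hyv.symm) hxy.ne
    · have := hf_nbr y (hs'.2 ⟨hyv, hy⟩) (hxv ▸ hxy)
      omega
    · have := hf_nbr x (hs'.2 ⟨hxv, hx⟩) (hyv ▸ hxy.symm)
      omega
    · have := hf_adj x (hs'.2 ⟨hxv, hx⟩) y (hs'.2 ⟨hyv, hy⟩) hxy
      simp only [hasse_adj, Nat.covBy_iff_add_one_eq] at this
      omega

namespace IsLinearForest

variable {H : SimpleGraph W}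

lemma subsingleton_neighborSet_diff (hH : H.IsLinearForest) {u v : W} (huv : H.Adj u v) :
    (H.neighborSet u \ {v}).Subsingleton := by
  have h := hH.2 u
  rw [← Set.encard_sdiff_singleton_add_one ((H.mem_neighborSet u v).2 huv)] at h
  exact Set.encard_le_one_iff_subsingleton.1
    ((WithTop.add_le_add_iff_right WithTop.one_ne_top).1 h)

lemma exists_numbering_from (hH : H.IsLinearForest) (s : Finset W) :
    ∀ v ∈ s, (H.neighborSet v ∩ s).Subsingleton →
      ∃ f : W → ℕ, Set.InjOn f s ∧ f v = 0 ∧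
        ∀ x ∈ s, ∀ y ∈ s, H.Adj x y → (hasse ℕ).Adj (f x) (f y) := by
  classical
  induction s using Finset.strongInduction with
  | H s ih =>
  intro v hv hleaf
  set s' := s.erase v
  have hs' : ∀ {x}, x ∈ s' ↔ x ≠ v ∧ x ∈ s := Finset.mem_erase
  obtain ⟨f, hf_inj, hf_adj, hf_nbr⟩ : ∃ f : W → ℕ, Set.InjOn f s' ∧
      (∀ x ∈ s', ∀ y ∈ s', H.Adj x y → (hasse ℕ).Adj (f x) (f y)) ∧
      ∀ y ∈ s', H.Adj v y → f y = 0 := by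
    by_cases hnbr : ∃ u ∈ s', H.Adj v u
    · obtain ⟨u, hu, hvu⟩ := hnbr
      have hu_leaf : (H.neighborSet u ∩ s').Subsingleton :=
        (hH.subsingleton_neighborSet_diff hvu.symm).anti fun x hx =>
          ⟨hx.1, fun hxv => (hs'.1 hx.2).1 hxv⟩
      obtain ⟨f, hf_inj, hf0, hf_adj⟩ := ih s' (Finset.erase_ssubset hv) u hu hu_leaf
      refine ⟨f, hf_inj, hf_adj, fun y hy hvy => ?_⟩
      rw [hleaf ⟨hvy, (hs'.1 hy).2⟩ ⟨hvu, (hs'.1 hu).2⟩, hf0]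
    rcases s'.eq_empty_or_nonempty with hempty | hne
    · exact ⟨0, by simp [hempty]⟩
    obtain ⟨u, hu, hu_leaf⟩ := hH.1.exists_subsingleton_neighborSet_inter s'.finite_toSet hne
    obtain ⟨f, hf_inj, -, hf_adj⟩ := ih s' (Finset.erase_ssubset hv) u hu hu_leaf
    exact ⟨f, hf_inj, hf_adj, fun y hy hvy => absurd ⟨y, hy, hvy⟩ hnbr⟩
  exact exists_numbering_of_erase hf_inj hf_adj hf_nbr

theorem exists_injective_hom_hasse_nat [Finite W] (hH : H.IsLinearForest) :
    ∃ f : H →g hasse ℕ, Function.Injective f := by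
  classical
  have := Fintype.ofFinite W
  cases isEmpty_or_nonempty W
  · exact ⟨⟨isEmptyElim, fun {a} => isEmptyElim a⟩, fun a => isEmptyElim a⟩
  obtain ⟨v, hv⟩ := hH.1.exists_subsingleton_neighborSet
  obtain ⟨f, hf_inj, -, hf_adj⟩ := hH.exists_numbering_from Finset.univ v (Finset.mem_univ v)
    (hv.anti Set.inter_subset_left)
  refine ⟨⟨f, fun h => hf_adj _ (Finset.mem_univ _) _ (Finset.mem_univ _) h⟩, ?_⟩
  rwa [Finset.coe_univ, Set.injOn_univ] at hf_inj

end IsLinearForest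

end SimpleGraph

open SimpleGraph

lemma inducesLinearForest_iff {V : Type*} [Finite V] {G : SimpleGraph V} {U : Set V} :
    InducesLinearForest G U ↔ (G.induce U).IsLinearForest := by
  refine and_congr Iff.rfl ?_
  rw [Subtype.forall]
  refine forall₂_congr fun v hv => ?_
  have hset :
      {w | w ∈ U ∧ G.Adj v w} = Subtype.val '' (G.induce U).neighborSet ⟨v, hv⟩ := by
    ext w
    simp [and_comm]
  rw [hset, Set.ncard_image_of_injective _ Subtype.val_injective,
    ← (Set.toFinite _).cast_ncard_eq]
  norm_cast

lemma InducesLinearForest.exists_numbering {V : Type*} [Finite V] {G : SimpleGraph V}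
    {U : Set V} (h : InducesLinearForest G U) :
    ∃ f : V → ℕ, U.InjOn f ∧
      ∀ x ∈ U, ∀ y ∈ U, G.Adj x y → (hasse ℕ).Adj (f x) (f y) := by
  classical
  obtain ⟨f, hf⟩ := (inducesLinearForest_iff.1 h).exists_injective_hom_hasse_nat
  refine ⟨fun v => if hv : v ∈ U then f ⟨v, hv⟩ else 0, fun x hx y hy hxy => ?_,
    fun x hx y hy hxy => ?_⟩
  · simp only [dif_pos hx, dif_pos hy] at hxy
    exact congrArg Subtype.val (hf hxy)
  · simp only [dif_pos hx, dif_pos hy]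
    exact f.map_adj hxy

lemma exists_lex_numbering {V ι : Type*} [Finite V] [Preorder ι] {G : SimpleGraph V}
    (c : V → ι) (hc : ∀ i, InducesLinearForest G {v | c v = i}) :
    ∃ g : V → ι ×ₗ ℕ, Function.Injective g ∧
      ∀ u w, G.Adj u w → c u = c w → (hasse (ι ×ₗ ℕ)).Adj (g u) (g w) := by
  choose f hf_inj hf_adj using fun i => (hc i).exists_numbering
  refine ⟨fun v => toLex (c v, f (c v) v), fun u w huw => ?_, fun u w huw hcuw => ?_⟩
  · obtain ⟨hcuw, hfuw⟩ := Prod.mk.inj (toLex.injective huw)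
    rw [← hcuw] at hfuw
    exact hf_inj (c u) rfl hcuw.symm hfuw
  · dsimp only
    rw [← hcuw]
    exact hasse_toLex_adj _ (hf_adj (c u) u rfl w hcuw.symm huw)

theorem stmt14_general {V : Type*} [Fintype V] (G : SimpleGraph V) (k : ℕ) :
    (∃ c : V → Fin k, ∀ i : Fin k, InducesLinearForest G {v | c v = i}) ↔
      (∃ (c : V → Fin k) (L : LinearOrder V), ∀ u w : V, G.Adj u w → c u = c w →
        ¬ ∃ v : V, (L.lt u v ∧ L.lt v w) ∨ (L.lt w v ∧ L.lt v u)) := by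
  constructor
  · rintro ⟨c, hc⟩
    obtain ⟨g, hg, hg_adj⟩ := exists_lex_numbering c hc
    refine ⟨c, LinearOrder.lift' g hg, fun u w huw hcuw ⟨v, hv⟩ => ?_⟩
    exact (hasse_adj_iff_not_exists_between (hg.ne huw.ne)).1 (hg_adj u w huw hcuw) ⟨g v, hv⟩
  · rintro ⟨c, L, hL⟩
    let _ : LinearOrder V := L
    refine ⟨c, fun i => inducesLinearForest_iff.2 (isLinearForest_hasse.comap
      ⟨Subtype.val, fun {x y} hxy => ?_⟩ Subtype.val_injective)⟩
    exact (hasse_adj_iff_not_exists_between (G.ne_of_adj hxy)).2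
      (hL x y hxy (x.2.trans y.2.symm))

/-- Correctness of the compact ILP/SAT formulation: for a finite simple graph `G` and
a positive integer `k`, the vertex set of `G` can be partitioned into (at most) `k`
sets each inducing a linear forest if and only if there exist a coloring
`c : V → Fin k` and a linear order on `V` such that for every edge `{u, w}` of `G`
with `c u = c w`, the vertices `u` and `w` are consecutive in the order (there is no
vertex `v` strictly between them). -/
theorem stmt14 {V : Type*} [Fintype V] (G : SimpleGraph V) (k : ℕ) (hk : 0 < k) :
    (∃ c : V → Fin k, ∀ i : Fin k, InducesLinearForest G {v | c v = i}) ↔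
      (∃ (c : V → Fin k) (L : LinearOrder V), ∀ u w : V, G.Adj u w → c u = c w →
        ¬ ∃ v : V, (L.lt u v ∧ L.lt v w) ∨ (L.lt w v ∧ L.lt v u)) :=
  stmt14_general G k
end
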